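/- arXiv:math/0003058 — 4 statements merged into one kernel-verified Lean document; each statement's English description precedes it below -/
import Mathlib

section
/- For the Lie algebra g₄₄₁ (brackets [X,Y]=Z, [T,X]=−Y, [T,Y]=X), fix real numbers α,β,γ with γ ≠ 0. Define for A = aX+bY+cZ+dT the function Ã_A(p,q) = (d/(2γ))p² + (a·cos q + b·sin q)p + cγ + dδ − d(α²+β²)/(2γ) on ℝ² (for some fixed δ ∈ ℝ). Then the map sending the Hamiltonian functions to Hamiltonian vector fields with respect to the symplectic form ω = (γ/p) dp ∧ dq is compatible with the bracket: ω(ξ_A, ξ_B) = Ã_{[A,B]}, where ξ_A is the Hamiltonian vector field of Ã_A. -/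
/-- The Hamiltonian function on the orbit of `g₄₄₁` (case `γ ≠ 0`), for
`A = aX+bY+cZ+dT`:
`Ã_A(p,q) = (d/(2γ))p² + (a cos q + b sin q)p + cγ + dδ − d(α²+β²)/(2γ)`. -/
noncomputable def Atil441 (α β γ δ a b c d : ℝ) : ℝ → ℝ → ℝ := fun p q =>
  d / (2 * γ) * p ^ 2 + (a * Real.cos q + b * Real.sin q) * p
    + c * γ + d * δ - d * (α ^ 2 + β ^ 2) / (2 * γ)

lemma derivP (α β γ δ a b c d q p : ℝ) :
    deriv (fun p' => Atil441 α β γ δ a b c d p' q) p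
      = d / (2 * γ) * (2 * p) + (a * Real.cos q + b * Real.sin q) := by
  have h : HasDerivAt (fun p' => Atil441 α β γ δ a b c d p' q)
      (d / (2 * γ) * (2 * p) + (a * Real.cos q + b * Real.sin q)) p := by
    unfold Atil441
    have h1 : HasDerivAt (fun p' : ℝ => d / (2 * γ) * p' ^ 2) (d / (2 * γ) * (2 * p)) p := by
      simpa using ((hasDerivAt_pow 2 p).const_mul (d / (2 * γ)))
    have h2 : HasDerivAt (fun p' : ℝ => (a * Real.cos q + b * Real.sin q) * p')
        (a * Real.cos q + b * Real.sin q) p := by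
      simpa using (hasDerivAt_id p).const_mul (a * Real.cos q + b * Real.sin q)
    exact ((((h1.add h2).add_const (c * γ)).add_const (d * δ)).sub_const
      (d * (α ^ 2 + β ^ 2) / (2 * γ)))
  exact h.deriv

lemma derivQ (α β γ δ a b c d p q : ℝ) :
    deriv (fun q' => Atil441 α β γ δ a b c d p q') q
      = (-(a * Real.sin q) + b * Real.cos q) * p := by
  have h : HasDerivAt (fun q' => Atil441 α β γ δ a b c d p q')
      ((-(a * Real.sin q) + b * Real.cos q) * p) q := by
    unfold Atil441
    have h2 : HasDerivAt (fun q' : ℝ => (a * Real.cos q' + b * Real.sin q') * p)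
        ((-(a * Real.sin q) + b * Real.cos q) * p) q := by
      simpa [mul_neg] using (((Real.hasDerivAt_cos q).const_mul a).add
        ((Real.hasDerivAt_sin q).const_mul b)).mul_const p
    simpa using (((((hasDerivAt_const q (d / (2 * γ) * p ^ 2)).add h2).add_const (c * γ)).add_const (d * δ)).sub_const (d * (α ^ 2 + β ^ 2) / (2 * γ)))
  exact h.deriv

/-- For the symplectic form `ω = (γ/p) dp∧dq` on the half-plane `p > 0`, the
evaluation of `ω` on the Hamiltonian vector fields of `Ã_A`, `Ã_B` — i.e.
`(γ/p)(∂_p Ã_A ∂_q Ã_B − ∂_q Ã_A ∂_p Ã_B)` in coordinates — equals `Ã_{[A,B]}`,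
where in `g₄₄₁` (brackets `[X,Y]=Z, [T,X]=−Y, [T,Y]=X`)
`[A,B] = (db'−d'b)X + (ad'−a'd)Y + (ab'−a'b)Z`. -/
theorem stmt_8 (α β γ δ : ℝ) (hγ : γ ≠ 0)
    (a b c d a' b' c' d' : ℝ) (p q : ℝ) (hp : 0 < p) :
    (γ / p) *
      (deriv (fun p' => Atil441 α β γ δ a b c d p' q) p *
          deriv (fun q' => Atil441 α β γ δ a' b' c' d' p q') q
        - deriv (fun q' => Atil441 α β γ δ a b c d p q') q *
          deriv (fun p' => Atil441 α β γ δ a' b' c' d' p' q) p)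
      = Atil441 α β γ δ (d * b' - d' * b) (a * d' - a' * d) (a * b' - a' * b) 0 p q := by
  rw [derivP, derivP, derivQ, derivQ]
  unfold Atil441
  have hs := Real.sin_sq_add_cos_sq q
  field_simp
  linear_combination (2 * γ * γ * (a * b' - a' * b)) * hs
end

section
/- Define for smooth Φ,Ψ : ℝ → ℝ the operator L_{Φ,Ψ} on smooth functions f : ℝ² → ℂ (variables (s,t)) by L_{Φ,Ψ}(f) = Φ(s)∂_s f + iΨ(s)f. If Ã_A(p,q) = Φ_A(q)p + Ψ_A(q) is a family of Hamiltonian functions indexed by a Lie algebra g such that {Ã_A, Ã_B} = Ã_{[A,B]}, then the operators Ĥ_A := L_{Φ_A, Ψ_A} satisfy Ĥ_A ∘ Ĥ_B − Ĥ_B ∘ Ĥ_A = Ĥ_{[A,B]}, i.e., A ↦ Ĥ_A is a Lie algebra representation by first-order differential operators. -/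
/-- The first-order differential operator
`L_{Φ,Ψ}(f)(s,t) = Φ(s)·∂_s f(s,t) + iΨ(s)·f(s,t)` on functions on ℝ². -/
noncomputable def Lop (Φ Ψ : ℝ → ℝ) (f : ℝ × ℝ → ℂ) : ℝ × ℝ → ℂ := fun st =>
  (Φ st.1 : ℂ) * deriv (fun s => f (s, st.2)) st.1 + Complex.I * (Ψ st.1 : ℂ) * f st

/-- If `Ã_A(p,q) = Φ_A(q)p + Ψ_A(q)` is a family of Hamiltonian functions, linear
in `A ∈ g`, smooth in `q`, with `{Ã_A, Ã_B} = Ã_{[A,B]}`, then the operators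
`Ĥ_A = L_{Φ_A,Ψ_A}` form a Lie algebra representation:
`Ĥ_A ∘ Ĥ_B − Ĥ_B ∘ Ĥ_A = Ĥ_{[A,B]}`. -/
theorem stmt_12 {g : Type*} [LieRing g] [LieAlgebra ℝ g]
    (Φ Ψ : g →ₗ[ℝ] (ℝ → ℝ))
    (hΦ : ∀ A, ContDiff ℝ (⊤ : ℕ∞) (Φ A)) (hΨ : ∀ A, ContDiff ℝ (⊤ : ℕ∞) (Ψ A))
    (hPoisson : ∀ A B : g, ∀ p q : ℝ,
      Φ A q * (deriv (Φ B) q * p + deriv (Ψ B) q)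
        - (deriv (Φ A) q * p + deriv (Ψ A) q) * Φ B q
      = Φ ⁅A, B⁆ q * p + Ψ ⁅A, B⁆ q)
    (A B : g) (f : ℝ × ℝ → ℂ) (hf : ContDiff ℝ (⊤ : ℕ∞) f) :
    Lop (Φ A) (Ψ A) (Lop (Φ B) (Ψ B) f) - Lop (Φ B) (Ψ B) (Lop (Φ A) (Ψ A) f)
      = Lop (Φ ⁅A, B⁆) (Ψ ⁅A, B⁆) f := by
  have hPsiBr : ∀ q : ℝ, Φ A q * deriv (Ψ B) q - deriv (Ψ A) q * Φ B q = Ψ ⁅A, B⁆ q := by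
    intro q
    have h0 := hPoisson A B 0 q
    simpa using h0
  have hPhiBr : ∀ q : ℝ, Φ A q * deriv (Φ B) q - deriv (Φ A) q * Φ B q = Φ ⁅A, B⁆ q := by
    intro q
    have h0 := hPoisson A B 0 q
    have h1 := hPoisson A B 1 q
    simp only [mul_one, mul_zero, zero_add] at h0 h1
    linarith
  funext st
  obtain ⟨s, t⟩ := st
  simp only [Lop, Pi.sub_apply]
  set u : ℝ → ℂ := fun x => f (x, t) with hu_def
  have hu : ContDiff ℝ (⊤ : ℕ∞) u := hf.comp (contDiff_id.prodMk contDiff_const)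
  have hu' : ContDiff ℝ (⊤ : ℕ∞) (deriv u) :=
    (contDiff_infty_iff_deriv.mp (hu.of_le (by simp))).2
  have hdu : HasDerivAt u (deriv u s) s := (hu.differentiable (by simp) s).hasDerivAt
  have hdu' : HasDerivAt (deriv u) (deriv (deriv u) s) s :=
    (hu'.differentiable (by simp) s).hasDerivAt
  have inner : ∀ P Q : g,
      deriv (fun x => ((Φ P x : ℂ)) * deriv u x + Complex.I * (Ψ P x : ℂ) * u x) s
        = ((deriv (Φ P) s : ℝ) : ℂ) * deriv u s + (Φ P s : ℂ) * deriv (deriv u) s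
          + Complex.I * (((deriv (Ψ P) s : ℝ) : ℂ) * u s + (Ψ P s : ℂ) * deriv u s) := by
    intro P Q
    have hP : HasDerivAt (fun x => ((Φ P x : ℝ) : ℂ)) ((deriv (Φ P) s : ℝ) : ℂ) s :=
      (((hΦ P).differentiable (by simp) s).hasDerivAt).ofReal_comp
    have hQ : HasDerivAt (fun x => ((Ψ P x : ℝ) : ℂ)) ((deriv (Ψ P) s : ℝ) : ℂ) s :=
      (((hΨ P).differentiable (by simp) s).hasDerivAt).ofReal_comp
    have h1 : HasDerivAt (fun x => ((Φ P x : ℂ)) * deriv u x)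
        (((deriv (Φ P) s : ℝ) : ℂ) * deriv u s + (Φ P s : ℂ) * deriv (deriv u) s) s := hP.mul hdu'
    have h2 : HasDerivAt (fun x => Complex.I * (Ψ P x : ℂ) * u x)
        (Complex.I * (((deriv (Ψ P) s : ℝ) : ℂ) * u s + (Ψ P s : ℂ) * deriv u s)) s := by
      have := (hQ.mul hdu).const_mul Complex.I
      simpa [mul_comm, mul_assoc, mul_add, mul_left_comm] using this
    have := (h1.add h2).deriv
    exact this
  rw [inner A A, inner B B]
  have hc : ((Φ A s : ℂ)) * ((deriv (Φ B) s : ℝ) : ℂ) - ((deriv (Φ A) s : ℝ) : ℂ) * (Φ B s : ℂ)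
      = (Φ ⁅A, B⁆ s : ℂ) := by exact_mod_cast hPhiBr s
  have hd : ((Φ A s : ℂ)) * ((deriv (Ψ B) s : ℝ) : ℂ) - ((deriv (Ψ A) s : ℝ) : ℂ) * (Φ B s : ℂ)
      = (Ψ ⁅A, B⁆ s : ℂ) := by exact_mod_cast hPsiBr s
  linear_combination (deriv u s) * hc + Complex.I * (u s) * hd
end

section
/- For the Lie algebra g₄₄₁ ([X,Y]=Z, [T,X]=−Y, [T,Y]=X), fix α,β ∈ ℝ, and define the operators Ĥ_A = d·∂_s + i[(aα+bβ)cos s + (bα−aβ)sin s] (multiplication operator) acting on smooth functions of (s,t) ∈ ℝ², for A = aX+bY+cZ+dT. Then Ĥ_A∘Ĥ_B − Ĥ_B∘Ĥ_A = Ĥ_{[A,B]}. -/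
/-- The operator `Ĥ_A` for `A = aX+bY+cZ+dT ∈ g₄₄₁` on the cylinder-type orbits
(with fixed parameters `α, β`):
`(Ĥ_A f)(s,t) = d·∂_s f(s,t) + i[(aα+bβ)cos s + (bα−aβ)sin s]·f(s,t)`.
(Here `Z` acts as `0`, consistent with `γ = 0` on these orbits.) -/
noncomputable def Hop441 (α β : ℝ) (a b c d : ℝ) (f : ℝ × ℝ → ℂ) : ℝ × ℝ → ℂ :=
  fun st => (d : ℂ) * deriv (fun s => f (s, st.2)) st.1
    + Complex.I * (((a * α + b * β) * Real.cos st.1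
        + (b * α - a * β) * Real.sin st.1 : ℝ) : ℂ) * f st

lemma Hop441_apply (α β a b c d : ℝ) (f : ℝ × ℝ → ℂ) (s t : ℝ) :
    Hop441 α β a b c d f (s, t) = (d : ℂ) * deriv (fun u => f (u, t)) s
      + Complex.I * (((a * α + b * β) * Real.cos s
          + (b * α - a * β) * Real.sin s : ℝ) : ℂ) * f (s, t) := rfl

/-- For `g₄₄₁` (brackets `[X,Y]=Z, [T,X]=−Y, [T,Y]=X`, so
`[A,B] = (db'−d'b)X + (ad'−a'd)Y + (ab'−a'b)Z`), the operators `Ĥ_A` satisfy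
`Ĥ_A∘Ĥ_B − Ĥ_B∘Ĥ_A = Ĥ_{[A,B]}`. -/
theorem stmt_13 (α β : ℝ) (a b c d a' b' c' d' : ℝ)
    (f : ℝ × ℝ → ℂ) (hf : ContDiff ℝ (⊤ : ℕ∞) f) :
    Hop441 α β a b c d (Hop441 α β a' b' c' d' f)
      - Hop441 α β a' b' c' d' (Hop441 α β a b c d f)
      = Hop441 α β (d * b' - d' * b) (a * d' - a' * d) (a * b' - a' * b) 0 f := by
  funext st
  obtain ⟨s, t⟩ := st
  have hF : ContDiff ℝ (⊤ : ℕ∞) (fun u : ℝ => f (u, t)) :=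
    hf.comp (contDiff_id.prodMk contDiff_const)
  have hF1 : Differentiable ℝ (fun u : ℝ => f (u, t)) :=
    hF.differentiable (by simp)
  have hF2 : Differentiable ℝ (deriv (fun u : ℝ => f (u, t))) :=
    ((contDiff_infty_iff_deriv.mp (hF.of_le (by simp))).2).differentiable (by simp)
  have hm : ∀ (p q : ℝ) (u : ℝ),
      HasDerivAt (fun v : ℝ => (((p * α + q * β) * Real.cos v
          + (q * α - p * β) * Real.sin v : ℝ) : ℂ))
        (((p * α + q * β) * (-Real.sin u) + (q * α - p * β) * Real.cos u : ℝ) : ℂ) u := by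
    intro p q u
    exact (((Real.hasDerivAt_cos u).const_mul _).add
      ((Real.hasDerivAt_sin u).const_mul _)).ofReal_comp
  have hinner : ∀ (p q r : ℝ),
      deriv (fun v : ℝ => (r : ℂ) * deriv (fun u : ℝ => f (u, t)) v
          + Complex.I * (((p * α + q * β) * Real.cos v
            + (q * α - p * β) * Real.sin v : ℝ) : ℂ) * f (v, t)) s
      = (r : ℂ) * deriv (deriv (fun u : ℝ => f (u, t))) s
          + (Complex.I * (((p * α + q * β) * (-Real.sin s)
              + (q * α - p * β) * Real.cos s : ℝ) : ℂ) * f (s, t)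
            + Complex.I * (((p * α + q * β) * Real.cos s
              + (q * α - p * β) * Real.sin s : ℝ) : ℂ)
                * deriv (fun u : ℝ => f (u, t)) s) := by
    intro p q r
    exact (((hF2 s).hasDerivAt.const_mul (r : ℂ)).add
      (((hm p q s).const_mul Complex.I).mul (hF1 s).hasDerivAt)).deriv
  simp only [Pi.sub_apply, Hop441_apply]
  rw [hinner a' b' d', hinner a b d]
  push_cast
  ring
end

section
/- For the Lie algebra g₄₂₁(λ) with brackets [T,Y]=λY, [T,Z]=Z (λ ≠ 0), fix α,β,γ ∈ ℝ and define Ã_A(p,q) = dp + cγe^q + aα + bβe^{qλ} for A = aX+bY+cZ+dT. Then the first-order operators Ĥ_A f(s,t) = d∂_s f + i(cγe^s + aα + bβe^{sλ})f on C^∞(ℝ²,ℂ) satisfy [Ĥ_A, Ĥ_B] = Ĥ_{[A,B]}. -/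
/-- The operator `Ĥ_A` for `A = aX+bY+cZ+dT ∈ g₄₂₁(λ)` (parameters `α,β,γ`):
`(Ĥ_A f)(s,t) = d·∂_s f(s,t) + i(cγe^s + aα + bβe^{λs})·f(s,t)`. -/
noncomputable def Hop421 (lam α β γ : ℝ) (a b c d : ℝ) (f : ℝ × ℝ → ℂ) :
    ℝ × ℝ → ℂ := fun st =>
  (d : ℂ) * deriv (fun s => f (s, st.2)) st.1
    + Complex.I * ((c * γ * Real.exp st.1 + a * α
        + b * β * Real.exp (lam * st.1) : ℝ) : ℂ) * f st

lemma phi_hasDerivAt (lam α β γ a b c : ℝ) (s : ℝ) :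
    HasDerivAt (fun x : ℝ => c * γ * Real.exp x + a * α + b * β * Real.exp (lam * x))
      (c * γ * Real.exp s + b * β * (lam * Real.exp (lam * s))) s := by
  have h1 : HasDerivAt (fun x : ℝ => c * γ * Real.exp x) (c * γ * Real.exp s) s :=
    (Real.hasDerivAt_exp s).const_mul _
  have h2 : HasDerivAt (fun x : ℝ => Real.exp (lam * x)) (lam * Real.exp (lam * s)) s := by
    simpa [mul_comm, Function.comp_def] using ((Real.hasDerivAt_exp (lam * s)).comp s
      ((hasDerivAt_id s).const_mul lam))
  exact ((h1.add_const (a * α)).add (h2.const_mul (b * β)))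

/-- For `g₄₂₁(λ)` (brackets `[T,Y]=λY, [T,Z]=Z` with `λ ≠ 0`, so
`[A,B] = λ(db'−d'b)Y + (dc'−d'c)Z`), the operators `Ĥ_A` satisfy
`[Ĥ_A, Ĥ_B] = Ĥ_{[A,B]}`. -/
theorem stmt_18 (lam : ℝ) (hlam : lam ≠ 0) (α β γ : ℝ)
    (a b c d a' b' c' d' : ℝ) (f : ℝ × ℝ → ℂ) (hf : ContDiff ℝ (⊤ : ℕ∞) f) :
    Hop421 lam α β γ a b c d (Hop421 lam α β γ a' b' c' d' f)
      - Hop421 lam α β γ a' b' c' d' (Hop421 lam α β γ a b c d f)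
      = Hop421 lam α β γ 0 (lam * (d * b' - d' * b)) (d * c' - d' * c) 0 f := by
  funext st
  obtain ⟨s, t⟩ := st
  set F : ℝ → ℂ := fun x => f (x, t) with hFdef
  have hFsm : ContDiff ℝ (⊤ : ℕ∞) F := hf.comp (contDiff_id.prodMk contDiff_const)
  have hFdiff : Differentiable ℝ F := hFsm.differentiable (by simp)
  have hF'sm : ContDiff ℝ ((⊤:ℕ∞):WithTop ℕ∞) (deriv F) := (contDiff_infty_iff_deriv.mp (hFsm.of_le (by simp))).2
  have hFd : ∀ x, HasDerivAt F (deriv F x) x := fun x => (hFdiff x).hasDerivAt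
  have hFd2 : ∀ x, HasDerivAt (deriv F) (deriv (deriv F) x) x :=
    fun x => (hF'sm.differentiable (by simp) x).hasDerivAt
  -- derivative of s ↦ Hop421 _ _ _ _ a b c d f (s,t)
  have key : ∀ (a b c d : ℝ),
      HasDerivAt (fun x => (d : ℂ) * deriv F x
          + Complex.I * ((c * γ * Real.exp x + a * α + b * β * Real.exp (lam * x) : ℝ) : ℂ)
            * F x)
        ((d : ℂ) * deriv (deriv F) s
          + (Complex.I * ((c * γ * Real.exp s + b * β * (lam * Real.exp (lam * s)) : ℝ) : ℂ)
              * F s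
            + Complex.I * ((c * γ * Real.exp s + a * α + b * β * Real.exp (lam * s) : ℝ) : ℂ)
              * deriv F s)) s := by
    intro a b c d
    have hφ := ((phi_hasDerivAt lam α β γ a b c s).ofReal_comp).const_mul Complex.I
    have := ((hFd2 s).const_mul (d : ℂ)).add (hφ.mul (hFd s))
    exact this
  have e1 : (fun x => Hop421 lam α β γ a' b' c' d' f (x, t))
      = fun x => (d' : ℂ) * deriv F x
          + Complex.I * ((c' * γ * Real.exp x + a' * α + b' * β * Real.exp (lam * x) : ℝ) : ℂ)
            * F x := rfl
  have e2 : (fun x => Hop421 lam α β γ a b c d f (x, t))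
      = fun x => (d : ℂ) * deriv F x
          + Complex.I * ((c * γ * Real.exp x + a * α + b * β * Real.exp (lam * x) : ℝ) : ℂ)
            * F x := rfl
  simp only [hFdef] at key
  simp only [Pi.sub_apply, Hop421, e1, e2, (key a' b' c' d').deriv, (key a b c d).deriv]
  push_cast
  ring_nf
end
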